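/- If Player O has a winning strategy in the delay-free game Γ(L) (the delay game with constant delay function i ↦ 1), then Player O has an omnipotent round-counting strategy for L: a single function σ : Σ_I^* × ℕ → Σ_O such that for every delay function f, every play of Γ_f(L) consistent with σ (where Player O's move in round i is σ(u_0⋯u_i, i)) has its outcome in L. -/
import Mathlib


open scoped Classical MeasureTheory

section DelayGames

variable {I O A B : Type}

/-- `shiftSeq f β = ▷^{f 0 - 1} β 0 ▷^{f 1 - 1} β 1 ⋯`, where the skip symbol `▷`
is modeled by `none` and a letter `b ∈ Σ_O` by `some b`. -/
noncomputable def shiftSeq (f : ℕ → ℕ) (β : ℕ → O) : ℕ → Option O := fun n =>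
  if h : ∃ i, (∑ j ∈ Finset.range (i + 1), f j) = n + 1 then some (β (Nat.find h))
  else none

/-- `shift_f(L) = { (α, shift_f(β)) : (α, β) ∈ L }`. -/
def shiftLang (f : ℕ → ℕ) (L : Set ((ℕ → I) × (ℕ → O))) :
    Set ((ℕ → I) × (ℕ → Option O)) :=
  {p | ∃ β : ℕ → O, (p.1, β) ∈ L ∧ p.2 = shiftSeq f β}

/-- The morphism `h` erasing the skip symbol, applied to an infinite word
(meaningful when the word has infinitely many non-skip letters). -/
noncomputable def eraseSkips [Inhabited O] (β : ℕ → Option O) : ℕ → O := fun n =>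
  (β (Nat.nth (fun k => (β k).isSome) n)).getD default

/-- `skip(L) = ⋃_f shift_f(L) = { (α,β) : β has infinitely many non-▷ letters and (α, h β) ∈ L }`. -/
def skipLang [Inhabited O] (L : Set ((ℕ → I) × (ℕ → O))) :
    Set ((ℕ → I) × (ℕ → Option O)) :=
  {p | {k | (p.2 k).isSome}.Infinite ∧ (p.1, eraseSkips p.2) ∈ L}

/-- A play of a Gale-Stewart game is consistent with the Player O strategy `σ`. -/
def gsConsO (σ : List A → B) (α : ℕ → A) (β : ℕ → B) : Prop :=
  ∀ i, β i = σ (List.ofFn fun j : Fin (i + 1) => α j)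

/-- A play of a Gale-Stewart game is consistent with the Player I strategy `τ`. -/
def gsConsI (τ : List B → A) (α : ℕ → A) (β : ℕ → B) : Prop :=
  ∀ i, α i = τ (List.ofFn fun j : Fin i => β j)

/-- `σ` is a winning strategy for Player O in the Gale-Stewart game with winning condition `W`. -/
def gsWinO (W : Set ((ℕ → A) × (ℕ → B))) (σ : List A → B) : Prop :=
  ∀ α β, gsConsO σ α β → (α, β) ∈ W

/-- `τ` is a winning strategy for Player I in the Gale-Stewart game with winning condition `W`. -/
def gsWinI (W : Set ((ℕ → A) × (ℕ → B))) (τ : List B → A) : Prop :=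
  ∀ α β, gsConsI τ α β → (α, β) ∉ W

/-- The infinite word `u 0 · u 1 · u 2 ⋯` built by Player I in a delay game
(well-defined at position `n` as soon as the first `n+1` blocks have more than `n` letters). -/
def outcomeI [Inhabited I] (u : ℕ → List I) : ℕ → I := fun n =>
  ((List.ofFn fun j : Fin (n + 1) => u j).flatten).getD n default

/-- The word `v 0 ⋯ v (i-1)` of the first `i` letters of `v`. -/
def prefixW (v : ℕ → O) (i : ℕ) : List O := List.ofFn fun j : Fin i => v j

/-- The concatenation `u 0 · u 1 ⋯ u i` of Player I's moves up to round `i`. -/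
def inputsUpTo (u : ℕ → List I) (i : ℕ) : List I :=
  (List.ofFn fun j : Fin (i + 1) => u j).flatten

/-- `τ : Σ_O^* → Σ_I^*` is a (syntactically valid) Player I strategy for the
delay game `Γ_f(L)`: it answers with `f i` letters in round `i`. -/
def delayStratI (f : ℕ → ℕ) (τ : List O → List I) : Prop :=
  ∀ w : List O, (τ w).length = f w.length

/-- `τ` is winning for Player I in the delay game `Γ_f(L)`. -/
def delayWinI [Inhabited I] (f : ℕ → ℕ) (L : Set ((ℕ → I) × (ℕ → O)))
    (τ : List O → List I) : Prop :=
  ∀ (u : ℕ → List I) (v : ℕ → O), (∀ i, (u i).length = f i) →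
    (∀ i, u i = τ (prefixW v i)) → (outcomeI u, v) ∉ L

/-- `σ : Σ_I^* → Σ_O` is winning for Player O in the delay game `Γ_f(L)`. -/
def delayWinO [Inhabited I] (f : ℕ → ℕ) (L : Set ((ℕ → I) × (ℕ → O)))
    (σ : List I → O) : Prop :=
  ∀ (u : ℕ → List I) (v : ℕ → O), (∀ i, (u i).length = f i) →
    (∀ i, v i = σ (inputsUpTo u i)) → (outcomeI u, v) ∈ L

/-- A round-counting strategy `σ : Σ_I^* × ℕ → Σ_O` is winning for Player O in `Γ_f(L)`:
in round `i` Player O plays `σ (u 0 ⋯ u i) i`. -/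
def rcWinO [Inhabited I] (f : ℕ → ℕ) (L : Set ((ℕ → I) × (ℕ → O)))
    (σ : List I → ℕ → O) : Prop :=
  ∀ (u : ℕ → List I) (v : ℕ → O), (∀ i, (u i).length = f i) →
    (∀ i, v i = σ (inputsUpTo u i) i) → (outcomeI u, v) ∈ L

/-- An output-tracking strategy `τ : Σ_O^* → Σ_I^ω` is winning for Player I in `Γ_f(L)`:
in round `i` Player I plays the length-`f i` prefix of `τ (v 0 ⋯ v (i-1))`. -/
def otWinI [Inhabited I] (f : ℕ → ℕ) (L : Set ((ℕ → I) × (ℕ → O)))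
    (τ : List O → ℕ → I) : Prop :=
  ∀ (u : ℕ → List I) (v : ℕ → O),
    (∀ i, u i = List.ofFn fun j : Fin (f i) => τ (prefixW v i) j) →
    (outcomeI u, v) ∉ L

/-- A lookahead-counting strategy `τ : Σ_O^* × ℕ → Σ_I^ω` is winning for Player I in `Γ_f(L)`:
in round `i` Player I plays the length-`f i` prefix of `τ (v 0 ⋯ v (i-1), Σ_{j<i} f j)`. -/
def lcWinI [Inhabited I] (f : ℕ → ℕ) (L : Set ((ℕ → I) × (ℕ → O)))
    (τ : List O → ℕ → ℕ → I) : Prop :=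
  ∀ (u : ℕ → List I) (v : ℕ → O),
    (∀ i, u i = List.ofFn fun j : Fin (f i) =>
      τ (prefixW v i) (∑ k ∈ Finset.range i, f k) j) →
    (outcomeI u, v) ∉ L

/-- A history-tracking strategy `τ : Σ_O^* × (ℕ_{>0})^* → Σ_I^ω` is winning for Player I
in `Γ_f(L)`: in round `i` Player I plays the length-`f i` prefix of
`τ (v 0 ⋯ v (i-1), f 0 ⋯ f (i-1))`. -/
def htWinI [Inhabited I] (f : ℕ → ℕ) (L : Set ((ℕ → I) × (ℕ → O)))
    (τ : List O → List ℕ → ℕ → I) : Prop :=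
  ∀ (u : ℕ → List I) (v : ℕ → O),
    (∀ i, u i = List.ofFn fun j : Fin (f i) => τ (prefixW v i) (prefixW f i) j) →
    (outcomeI u, v) ∉ L

/-- `f ⊑ f'` : in every round, the lookahead granted by `f'` is at least that granted by `f`. -/
def delayLE (f f' : ℕ → ℕ) : Prop :=
  ∀ i, (∑ j ∈ Finset.range (i + 1), f j) ≤ ∑ j ∈ Finset.range (i + 1), f' j

end DelayGames
section Aux

variable {I : Type} [Inhabited I]

lemma inputsUpTo_succ (u : ℕ → List I) (i : ℕ) :
    inputsUpTo u (i + 1) = inputsUpTo u i ++ u (i + 1) := by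
  rw [inputsUpTo, inputsUpTo, List.ofFn_succ', List.concat_eq_append, List.flatten_append]
  simp

lemma inputsUpTo_prefix (u : ℕ → List I) {n i : ℕ} (h : n ≤ i) :
    inputsUpTo u n <+: inputsUpTo u i := by
  induction h with
  | refl => exact List.prefix_rfl
  | @step m _ ih => exact ih.trans ⟨u (m + 1), (inputsUpTo_succ u m).symm⟩

lemma inputsUpTo_length (u : ℕ → List I) (i : ℕ) :
    (inputsUpTo u i).length = ∑ j ∈ Finset.range (i + 1), (u j).length := by
  induction i with
  | zero => simp [inputsUpTo]
  | succ i ih => rw [inputsUpTo_succ, List.length_append, ih, ← Finset.sum_range_succ]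

lemma flatten_singletons {α : Type*} : ∀ (n : ℕ) (g : Fin n → α),
    (List.ofFn fun j => [g j]).flatten = List.ofFn g
  | 0, g => by simp
  | n + 1, g => by
    simp [List.ofFn_succ, flatten_singletons n fun i => g i.succ]

lemma outcomeI_eq (u : ℕ → List I) (n : ℕ) :
    outcomeI u n = (inputsUpTo u n).getD n default := rfl

end Aux

/-- if Player O wins the delay-free game `Γ(L)` (delay function `i ↦ 1`),
then she has an omnipotent round-counting strategy for `L`: a single
`σ : Σ_I^* × ℕ → Σ_O` winning in `Γ_f(L)` for every delay function `f`. -/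
theorem stmt13 {I O : Type} [Fintype I] [Fintype O] [Inhabited I]
    (L : Set ((ℕ → I) × (ℕ → O)))
    (hwin : ∃ σ : List I → O, delayWinO (fun _ => 1) L σ) :
    ∃ σrc : List I → ℕ → O, ∀ f : ℕ → ℕ, (∀ i, 0 < f i) → rcWinO f L σrc := by
  obtain ⟨σ, hσ⟩ := hwin
  refine ⟨fun w i => σ (w.take (i + 1)), fun f hf u v hlen hv => ?_⟩
  have hlong : ∀ i, i + 1 ≤ (inputsUpTo u i).length := by
    intro i
    rw [inputsUpTo_length]
    calc i + 1 = ∑ _j ∈ Finset.range (i + 1), 1 := by simp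
    _ ≤ _ := Finset.sum_le_sum fun j _ => by rw [hlen j]; exact hf j
  set u' : ℕ → List I := fun n => [outcomeI u n] with hu'
  have h1 : ∀ n, inputsUpTo u' n = List.ofFn fun j : Fin (n + 1) => outcomeI u j :=
    fun n => flatten_singletons (n + 1) fun j => outcomeI u j
  have houtc : outcomeI u' = outcomeI u := by
    funext n
    have hn : n < (List.ofFn fun j : Fin (n + 1) => outcomeI u j).length := by simp
    rw [outcomeI_eq, h1 n, List.getD_eq_getElem _ _ hn]
    simp only [List.getElem_ofFn]
  have hcons : ∀ i, v i = σ (inputsUpTo u' i) := by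
    intro i
    have h2 : (inputsUpTo u i).take (i + 1)
        = List.ofFn fun j : Fin (i + 1) => outcomeI u j := by
      apply List.ext_getElem
      · simp [Nat.min_eq_left (hlong i)]
      · intro n hn hn'
        simp only [List.getElem_take, List.getElem_ofFn]
        simp only [List.length_take, Nat.lt_min] at hn
        have hpre := inputsUpTo_prefix u (Nat.lt_succ_iff.mp hn.1)
        have hnl : n < (inputsUpTo u n).length := Nat.lt_of_lt_of_le n.lt_succ_self (hlong n)
        rw [outcomeI_eq, List.getD_eq_getElem _ _ hnl]
        exact (List.IsPrefix.getElem hpre hnl).symm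
    rw [h1 i, ← h2]
    exact hv i
  have := hσ u' v (fun i => rfl) hcons
  rwa [houtc] at this
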